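/- (Liveness for Crusader Agreement.) Under the Crusader Agreement hypotheses, every participant outputs a value: for every p ∈ P, (⨆_{v ∈ Val} output p v) ≥ B. -/
import Mathlib


/-- The three truth values, encoded as `Fin 3` with `0 = F`, `1 = B`, `2 = T`. -/
abbrev TV : Type := Fin 3

/-- false -/ def tF : TV := 0
/-- both/byzantine -/ def tB : TV := 1
/-- true -/ def tT : TV := 2

/-- Negation on `TV`: `neg F = T`, `neg B = B`, `neg T = F`. -/
def tneg (x : TV) : TV := ⟨2 - x.val, by omega⟩

/-- A semitopology: a collection of subsets containing the whole set and
closed under arbitrary unions. -/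
structure Semitopology (P : Type*) where
  opens : Set (Set P)
  univ_mem : Set.univ ∈ opens
  sUnion_mem : ∀ S : Set (Set P), S ⊆ opens → ⋃₀ S ∈ opens

namespace Semitopology

variable {P : Type*}

noncomputable def Everyone (f : P → TV) : TV := ⨅ p, f p

noncomputable def Someone (f : P → TV) : TV := ⨆ p, f p

noncomputable def Quorum (S : Semitopology P) (f : P → TV) : TV :=
  ⨆ O ∈ {O | O ∈ S.opens ∧ O.Nonempty}, ⨅ p ∈ O, f p

noncomputable def Contraquorum (S : Semitopology P) (f : P → TV) : TV :=
  ⨅ O ∈ {O | O ∈ S.opens ∧ O.Nonempty}, ⨆ p ∈ O, f p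

/-- A semitopology is 3-twined when any three nonempty open sets have
nonempty intersection. -/
def ThreeTwined (S : Semitopology P) : Prop :=
  ∀ O₁ O₂ O₃ : Set P, O₁ ∈ S.opens → O₂ ∈ S.opens → O₃ ∈ S.opens →
    O₁.Nonempty → O₂.Nonempty → O₃.Nonempty → (O₁ ∩ O₂ ∩ O₃).Nonempty

end Semitopology

open Semitopology

/-- The three-element value set for Crusader Agreement. -/
inductive CVal : Type
  | v0 | vhalf | v1
deriving DecidableEq

/-- Exclusive-or on `TV`: `B` if either argument is `B`; otherwise `T` if the
arguments differ and `F` if they agree. -/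
def txor (x y : TV) : TV := if x = tB ∨ y = tB then tB else if x = y then tF else tT


section CrusaderHelpers

lemma le_tT (x : TV) : x ≤ tT := by revert x; decide
lemma tv_le_tF {x : TV} (h : ¬ tB ≤ x) : x ≤ tF := by revert h; revert x; decide
lemma tv_le_tB {x : TV} (h : x ≠ tT) : x ≤ tB := by revert h; revert x; decide
lemma tv_eq_tT {x : TV} (h1 : x ≠ tB) (h2 : tB ≤ x) : x = tT := by
  revert h1 h2; revert x; decide
lemma tv_eq_tB {x : TV} (h1 : tB ≤ x) (h2 : x ≤ tB) : x = tB := le_antisymm h2 h1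
lemma tv_not_lt {x : TV} (h1 : tB ≤ x) : ¬ x ≤ tF := by revert h1; revert x; decide
lemma tv_ne_tT_of_le_tB {x : TV} (h : x ≤ tB) : x ≠ tT := by revert h; revert x; decide
lemma tv_eq_tT_of_not_le {x : TV} (h : ¬ x ≤ tB) : x = tT := by revert h; revert x; decide
lemma tneg_lemma {x : TV} (h : tB ≤ tneg x) : x ≠ tT := by revert h; revert x; decide
lemma txor_lemma {x y : TV} (hx : x ≠ tB) (hy : y ≠ tB) (h : tB ≤ txor x y) :
    x = tT ∨ y = tT := by revert hx hy h; revert x y; decide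

lemma exists_tB_le_of_iSup {ι : Sort*} {f : ι → TV} (h : tB ≤ ⨆ i, f i) : ∃ i, tB ≤ f i := by
  by_contra hc
  push_neg at hc
  exact tv_not_lt h (iSup_le fun i => tv_le_tF (not_le.mpr (hc i)))

lemma exists_eq_tT_of_iSup {ι : Sort*} {f : ι → TV} (h : ⨆ i, f i = tT) : ∃ i, f i = tT := by
  by_contra hc
  push_neg at hc
  have h2 : (⨆ i, f i) ≤ tB := iSup_le fun i => tv_le_tB (hc i)
  rw [h] at h2
  revert h2; decide

lemma exists_of_tB_le_bsup {ι : Type*} {s : Set ι} {f : ι → TV}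
    (h : tB ≤ ⨆ i ∈ s, f i) : ∃ i ∈ s, tB ≤ f i := by
  obtain ⟨i, hi⟩ := exists_tB_le_of_iSup h
  obtain ⟨hm, hv⟩ := exists_tB_le_of_iSup hi
  exact ⟨i, hm, hv⟩

lemma bsup_eq_tT {ι : Type*} {s : Set ι} {f : ι → TV} {i : ι}
    (hi : i ∈ s) (h : f i = tT) : ⨆ j ∈ s, f j = tT :=
  le_antisymm (le_tT _) (h ▸ le_biSup f hi)

lemma binf_eq_tT {ι : Type*} {s : Set ι} {f : ι → TV}
    (h : ∀ i ∈ s, f i = tT) : ⨅ i ∈ s, f i = tT :=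
  le_antisymm (le_tT _) (le_iInf fun i => le_iInf fun hi => (h i hi).ge)

end CrusaderHelpers

theorem crusader_liveness {P : Type*} (S : Semitopology P)
    (input echo1 echo2 output : P → CVal → TV)
    (h3t : S.ThreeTwined)
    (hEcho1Q : ∀ p v, echo1 p v = tT → Someone (fun q => input q v) = tT)
    (hEcho2Q : ∀ p v, echo2 p v = tT → tB ≤ S.Quorum (fun q => echo1 q v))
    (hOutputQ0 : ∀ p, output p CVal.v0 = tT → tB ≤ S.Quorum (fun q => echo2 q CVal.v0))
    (hOutputQ1 : ∀ p, output p CVal.v1 = tT → tB ≤ S.Quorum (fun q => echo2 q CVal.v1))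
    (hOutputQ' : ∀ p, output p CVal.vhalf = tT →
        tB ≤ S.Quorum (fun q => echo1 q CVal.v0) ∧ tB ≤ S.Quorum (fun q => echo1 q CVal.v1))
    (hCorrect : ∃ O ∈ S.opens, O.Nonempty ∧ ∀ q ∈ O, ∀ v : CVal,
        input q v ≠ tB ∧ echo1 q v ≠ tB ∧ echo2 q v ≠ tB ∧ output q v ≠ tB)
    (hCorrectInput : ∀ p, (∀ v : CVal, input p v ≠ tB) ∨ (∀ v : CVal, input p v = tB))
    (hCorrectEcho1 : ∀ p, (∀ v : CVal, echo1 p v ≠ tB) ∨ (∀ v : CVal, echo1 p v = tB))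
    (hCorrectEcho2 : ∀ p, (∀ v : CVal, echo2 p v ≠ tB) ∨ (∀ v : CVal, echo2 p v = tB))
    (hCorrectOutput : ∀ p, (∀ v : CVal, output p v ≠ tB) ∨ (∀ v : CVal, output p v = tB))
    (hInput : ∀ p, tB ≤ txor (input p CVal.v0) (input p CVal.v1) ⊓ tneg (input p CVal.vhalf))
    (hEcho201 : ∀ p (v v' : CVal), echo2 p v = tT → echo2 p v' = tT → v = v')
    (hEcho1B : ∀ p v, (input p v = tT ∨ S.Contraquorum (fun q => echo1 q v) = tT) →
        tB ≤ echo1 p v)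
    (hEcho2B : ∀ p, (∃ v'' : CVal, S.Quorum (fun q => echo1 q v'') = tT) →
        tB ≤ ⨆ v'' : CVal, echo2 p v'')
    (hOutputB : ∀ p v, S.Quorum (fun q => echo2 q v) = tT → tB ≤ output p v)
    (hOutputB' : ∀ p, S.Quorum (fun q => echo1 q CVal.v0) = tT ∧
        S.Quorum (fun q => echo1 q CVal.v1) = tT → tB ≤ output p CVal.vhalf) :
    ∀ p : P, tB ≤ ⨆ v : CVal, output p v  := by
  obtain ⟨O, hOopen, hOne, hOcor⟩ := hCorrect
  have hOs : O ∈ {O | O ∈ S.opens ∧ O.Nonempty} := ⟨hOopen, hOne⟩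
  have hmeet : ∀ O' ∈ {O | O ∈ S.opens ∧ O.Nonempty}, ∃ r, r ∈ O' ∧ r ∈ O := by
    intro O' hO'
    obtain ⟨r, hr⟩ := h3t O' O' O hO'.1 hO'.1 hOopen hO'.2 hO'.2 hOne
    exact ⟨r, hr.1.1, hr.2⟩
  have hIhalf : ∀ q, input q CVal.vhalf ≠ tT := fun q =>
    tneg_lemma (le_trans (hInput q) inf_le_right)
  have hE1half : ∀ q, echo1 q CVal.vhalf ≠ tT := by
    intro q h
    have hs := hEcho1Q q _ h
    unfold Semitopology.Someone at hs
    obtain ⟨r, hr⟩ := exists_eq_tT_of_iSup hs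
    exact hIhalf r hr
  have hQhalf : ¬ tB ≤ S.Quorum (fun q => echo1 q CVal.vhalf) := by
    intro h
    unfold Semitopology.Quorum at h
    obtain ⟨O', hO', hinf⟩ := exists_of_tB_le_bsup h
    obtain ⟨r, hrO', hrO⟩ := hmeet O' hO'
    have h1 : tB ≤ echo1 r CVal.vhalf := le_trans hinf (biInf_le _ hrO')
    exact hE1half r (tv_eq_tT ((hOcor r hrO CVal.vhalf).2.1) h1)
  have hE2half : ∀ q ∈ O, echo2 q CVal.vhalf ≠ tT := fun q _ h => hQhalf (hEcho2Q q _ h)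
  have hSplit : ∀ q ∈ O, echo1 q CVal.v0 = tT ∨ echo1 q CVal.v1 = tT := by
    intro q hq
    have hx := txor_lemma (hOcor q hq CVal.v0).1 (hOcor q hq CVal.v1).1
      (le_trans (hInput q) inf_le_left)
    rcases hx with h | h
    · exact Or.inl (tv_eq_tT (hOcor q hq CVal.v0).2.1 (hEcho1B q _ (Or.inl h)))
    · exact Or.inr (tv_eq_tT (hOcor q hq CVal.v1).2.1 (hEcho1B q _ (Or.inl h)))
  have hCQne : ∀ v : CVal, S.Contraquorum (fun q => echo1 q v) ≠ tT →
      ∃ O' ∈ {O | O ∈ S.opens ∧ O.Nonempty}, ∀ p ∈ O', echo1 p v ≤ tB := by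
    intro v h
    by_contra hc
    push_neg at hc
    apply h
    unfold Semitopology.Contraquorum
    apply binf_eq_tT
    intro O' hO'
    obtain ⟨p, hp, hple⟩ := hc O' hO'
    exact bsup_eq_tT hp (tv_eq_tT_of_not_le (not_le.mpr hple))
  have hCQQ : ∀ v : CVal, S.Contraquorum (fun q => echo1 q v) = tT →
      S.Quorum (fun q => echo1 q v) = tT := by
    intro v h
    have hall : ∀ q ∈ O, echo1 q v = tT := fun q hq =>
      tv_eq_tT (hOcor q hq v).2.1 (hEcho1B q v (Or.inr h))
    unfold Semitopology.Quorum
    exact bsup_eq_tT hOs (binf_eq_tT hall)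
  have hdich : S.Contraquorum (fun q => echo1 q CVal.v0) = tT ∨
      S.Contraquorum (fun q => echo1 q CVal.v1) = tT := by
    by_contra hc
    push_neg at hc
    obtain ⟨O0, hO0, hall0⟩ := hCQne CVal.v0 hc.1
    obtain ⟨O1, hO1, hall1⟩ := hCQne CVal.v1 hc.2
    obtain ⟨r, hr⟩ := h3t O0 O1 O hO0.1 hO1.1 hOopen hO0.2 hO1.2 hOne
    rcases hSplit r hr.2 with h | h
    · exact tv_ne_tT_of_le_tB (hall0 r hr.1.1) h
    · exact tv_ne_tT_of_le_tB (hall1 r hr.1.2) h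
  intro p
  by_cases hc0 : S.Contraquorum (fun q => echo1 q CVal.v0) = tT
  · by_cases hc1 : S.Contraquorum (fun q => echo1 q CVal.v1) = tT
    · exact le_trans (hOutputB' p ⟨hCQQ _ hc0, hCQQ _ hc1⟩) (le_iSup _ CVal.vhalf)
    · -- output v0
      have hQa : S.Quorum (fun q => echo1 q CVal.v0) = tT := hCQQ _ hc0
      obtain ⟨O1, hO1, hall1⟩ := hCQne CVal.v1 hc1
      have hE2b : ∀ q ∈ O, echo2 q CVal.v1 ≠ tT := by
        intro q hq h
        have hqq := hEcho2Q q _ h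
        unfold Semitopology.Quorum at hqq
        obtain ⟨O2, hO2, hinf⟩ := exists_of_tB_le_bsup hqq
        obtain ⟨r, hr⟩ := h3t O2 O1 O hO2.1 hO1.1 hOopen hO2.2 hO1.2 hOne
        have h1 : tB ≤ echo1 r CVal.v1 := le_trans hinf (biInf_le _ hr.1.1)
        exact (hOcor r hr.2 CVal.v1).2.1 (tv_eq_tB h1 (hall1 r hr.1.2))
      have hE2a : ∀ q ∈ O, echo2 q CVal.v0 = tT := by
        intro q hq
        obtain ⟨v, hv⟩ := exists_tB_le_of_iSup (hEcho2B q ⟨CVal.v0, hQa⟩)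
        have hvT : echo2 q v = tT := tv_eq_tT (hOcor q hq v).2.2.1 hv
        cases v with
        | v0 => exact hvT
        | vhalf => exact absurd hvT (hE2half q hq)
        | v1 => exact absurd hvT (hE2b q hq)
      have hQ2 : S.Quorum (fun q => echo2 q CVal.v0) = tT := by
        unfold Semitopology.Quorum
        exact bsup_eq_tT hOs (binf_eq_tT hE2a)
      exact le_trans (hOutputB p CVal.v0 hQ2) (le_iSup _ CVal.v0)
  · -- output v1 (symmetric)
    have hc1 := hdich.resolve_left hc0
    have hQa : S.Quorum (fun q => echo1 q CVal.v1) = tT := hCQQ _ hc1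
    obtain ⟨O0, hO0, hall0⟩ := hCQne CVal.v0 hc0
    have hE2b : ∀ q ∈ O, echo2 q CVal.v0 ≠ tT := by
      intro q hq h
      have hqq := hEcho2Q q _ h
      unfold Semitopology.Quorum at hqq
      obtain ⟨O2, hO2, hinf⟩ := exists_of_tB_le_bsup hqq
      obtain ⟨r, hr⟩ := h3t O2 O0 O hO2.1 hO0.1 hOopen hO2.2 hO0.2 hOne
      have h1 : tB ≤ echo1 r CVal.v0 := le_trans hinf (biInf_le _ hr.1.1)
      exact (hOcor r hr.2 CVal.v0).2.1 (tv_eq_tB h1 (hall0 r hr.1.2))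
    have hE2a : ∀ q ∈ O, echo2 q CVal.v1 = tT := by
      intro q hq
      obtain ⟨v, hv⟩ := exists_tB_le_of_iSup (hEcho2B q ⟨CVal.v1, hQa⟩)
      have hvT : echo2 q v = tT := tv_eq_tT (hOcor q hq v).2.2.1 hv
      cases v with
      | v1 => exact hvT
      | vhalf => exact absurd hvT (hE2half q hq)
      | v0 => exact absurd hvT (hE2b q hq)
    have hQ2 : S.Quorum (fun q => echo2 q CVal.v1) = tT := by
      unfold Semitopology.Quorum
      exact bsup_eq_tT hOs (binf_eq_tT hE2a)
    exact le_trans (hOutputB p CVal.v1 hQ2) (le_iSup _ CVal.v1)
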